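/- Let n, m ≥ 1, c > 0, let ε ≥ 0 and γ be reals with (ln 2)·γ > ε, and let H : ℝⁿ → ℝ² be given by H(x) = L · ReLU(Wx + b) + d, where W is a real n×n matrix, b ∈ ℝⁿ, L is a real 2×n matrix, d ∈ ℝ², and every row of W and of L has Euclidean norm at most c. Let x_1, …, x_m ∈ ℝⁿ with labels y_1, …, y_m ∈ {0,1}. Suppose the cross-entropy loss (1/m)·Σ_{i=1}^m ( −ln( e^{H(x_i)_{y_i}} / ( e^{H(x_i)_0} + e^{H(x_i)_1} ) ) ) is at most ε, and the set G = { i : Ĥ(x_i) = y_i } of correctly classified indices satisfies |G| ≥ γ·m. Then there exist nonnegative reals (ρ_i)_{i∈G} such that for every i ∈ G and every x' ∈ ℝⁿ with ‖x' − x_i‖₂ < ρ_i one has Ĥ(x') = Ĥ(x_i), and (1/m)·Σ_{i∈G} ρ_i ≥ ((ln 2)·γ − ε) / (√n·c²). -/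
import Mathlib


/-- Entrywise ReLU on vectors. -/
noncomputable def relu {p : ℕ} (v : Fin p → ℝ) : Fin p → ℝ := fun i => max (v i) 0

/-- Cauchy–Schwarz with absolute value and square roots. -/
lemma cs_abs {p : ℕ} (f g : Fin p → ℝ) :
    |∑ j, f j * g j| ≤ Real.sqrt (∑ j, f j ^ 2) * Real.sqrt (∑ j, g j ^ 2) := by
  rw [← Real.sqrt_sq_eq_abs, ← Real.sqrt_mul (Finset.sum_nonneg fun i _ => sq_nonneg _)]
  exact Real.sqrt_le_sqrt (Finset.sum_mul_sq_le_sq_mul_sq _ _ _)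

/-- Triangle inequality for Euclidean-style square-root sums. -/
lemma sqrt_sum_sub_sq_le {p : ℕ} (a b : Fin p → ℝ) :
    Real.sqrt (∑ j, (a j - b j) ^ 2) ≤
      Real.sqrt (∑ j, a j ^ 2) + Real.sqrt (∑ j, b j ^ 2) := by
  have hA : (0:ℝ) ≤ ∑ j, a j ^ 2 := Finset.sum_nonneg fun i _ => sq_nonneg _
  have hB : (0:ℝ) ≤ ∑ j, b j ^ 2 := Finset.sum_nonneg fun i _ => sq_nonneg _
  have hcs := cs_abs a b
  have hsq : (∑ j, (a j - b j) ^ 2) ≤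
      (Real.sqrt (∑ j, a j ^ 2) + Real.sqrt (∑ j, b j ^ 2)) ^ 2 := by
    have e1 : (∑ j, (a j - b j) ^ 2) =
        (∑ j, a j ^ 2) - 2 * (∑ j, a j * b j) + (∑ j, b j ^ 2) := by
      have e0 : ∀ j : Fin p, (a j - b j) ^ 2 = a j ^ 2 - 2 * (a j * b j) + b j ^ 2 :=
        fun j => by ring
      simp only [e0, Finset.sum_add_distrib, Finset.sum_sub_distrib, ← Finset.mul_sum]
    have e2 : Real.sqrt (∑ j, a j ^ 2) ^ 2 = ∑ j, a j ^ 2 := Real.sq_sqrt hA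
    have e3 : Real.sqrt (∑ j, b j ^ 2) ^ 2 = ∑ j, b j ^ 2 := Real.sq_sqrt hB
    have h4 := abs_le.mp hcs
    nlinarith [h4.1, h4.2]
  calc Real.sqrt (∑ j, (a j - b j) ^ 2)
      ≤ Real.sqrt ((Real.sqrt (∑ j, a j ^ 2) + Real.sqrt (∑ j, b j ^ 2)) ^ 2) :=
        Real.sqrt_le_sqrt hsq
    _ = _ := Real.sqrt_sq (by positivity)

/-- Lipschitz bound for the margin of the one-hidden-layer ReLU network. -/
lemma margin_lip {p : ℕ} (c : ℝ) (hc : 0 ≤ c)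
    (W : Matrix (Fin p) (Fin p) ℝ) (b : Fin p → ℝ) (L : Matrix (Fin 2) (Fin p) ℝ)
    (hW : ∀ i, Real.sqrt (∑ j, W i j ^ 2) ≤ c)
    (hL : ∀ i, Real.sqrt (∑ j, L i j ^ 2) ≤ c)
    (u v : Fin p → ℝ) :
    |(L.mulVec (relu (W.mulVec u + b)) 0 - L.mulVec (relu (W.mulVec u + b)) 1) -
     (L.mulVec (relu (W.mulVec v + b)) 0 - L.mulVec (relu (W.mulVec v + b)) 1)| ≤
      2 * (Real.sqrt p * c ^ 2) * Real.sqrt (∑ j, (u j - v j) ^ 2) := by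
  set r := relu (W.mulVec u + b) with hr
  set s := relu (W.mulVec v + b) with hs
  set a : Fin p → ℝ := fun j => L 0 j - L 1 j with ha
  have hD2 : (0:ℝ) ≤ ∑ j, (u j - v j) ^ 2 := Finset.sum_nonneg fun i _ => sq_nonneg _
  set D : ℝ := Real.sqrt (∑ j, (u j - v j) ^ 2) with hD
  have hDnn : 0 ≤ D := Real.sqrt_nonneg _
  have e1 : ∀ w : Fin p → ℝ, L.mulVec w 0 - L.mulVec w 1 = ∑ j, a j * w j := by
    intro w
    simp only [Matrix.mulVec, dotProduct, ha, sub_mul]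
    rw [Finset.sum_sub_distrib]
  have e2 : (L.mulVec r 0 - L.mulVec r 1) - (L.mulVec s 0 - L.mulVec s 1)
      = ∑ j, a j * (r j - s j) := by
    rw [e1, e1, ← Finset.sum_sub_distrib]
    apply Finset.sum_congr rfl; intro j _; ring
  rw [e2]
  have hcs := cs_abs a (fun j => r j - s j)
  have haL : Real.sqrt (∑ j, a j ^ 2) ≤ 2 * c := by
    calc Real.sqrt (∑ j, a j ^ 2)
        ≤ Real.sqrt (∑ j, L 0 j ^ 2) + Real.sqrt (∑ j, L 1 j ^ 2) :=
          sqrt_sum_sub_sq_le _ _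
      _ ≤ 2 * c := by have := hL 0; have := hL 1; linarith
  -- each coordinate of r - s
  have hrs : ∀ j, (r j - s j) ^ 2 ≤ c ^ 2 * (∑ k, (u k - v k) ^ 2) := by
    intro j
    have h1 : |r j - s j| ≤ |(W.mulVec u + b) j - (W.mulVec v + b) j| := by
      simpa [hr, hs, relu] using
        abs_max_sub_max_le_abs ((W.mulVec u + b) j) ((W.mulVec v + b) j) 0
    have h2 : (W.mulVec u + b) j - (W.mulVec v + b) j = ∑ k, W j k * (u k - v k) := by
      simp only [Pi.add_apply, Matrix.mulVec, dotProduct, mul_sub]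
      rw [Finset.sum_sub_distrib]
      ring
    have h3 : (∑ k, W j k * (u k - v k)) ^ 2 ≤
        (∑ k, W j k ^ 2) * (∑ k, (u k - v k) ^ 2) :=
      Finset.sum_mul_sq_le_sq_mul_sq _ _ _
    have h4 : (∑ k, W j k ^ 2) ≤ c ^ 2 := by
      have h5 : (0:ℝ) ≤ ∑ k, W j k ^ 2 := Finset.sum_nonneg fun i _ => sq_nonneg _
      have := hW j
      nlinarith [Real.sq_sqrt h5, Real.sqrt_nonneg (∑ k, W j k ^ 2)]
    have h6 : (r j - s j) ^ 2 ≤ (∑ k, W j k * (u k - v k)) ^ 2 := by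
      rw [← h2]
      have := sq_abs (r j - s j)
      nlinarith [abs_nonneg (r j - s j), sq_abs ((W.mulVec u + b) j - (W.mulVec v + b) j)]
    nlinarith [hD2]
  have hsum_rs : Real.sqrt (∑ j, (r j - s j) ^ 2) ≤ Real.sqrt p * (c * D) := by
    have h7 : (∑ j, (r j - s j) ^ 2) ≤ (p : ℝ) * (c ^ 2 * (∑ k, (u k - v k) ^ 2)) := by
      calc (∑ j, (r j - s j) ^ 2)
          ≤ ∑ _j : Fin p, (c ^ 2 * (∑ k, (u k - v k) ^ 2)) :=
            Finset.sum_le_sum fun j _ => hrs j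
        _ = (p : ℝ) * (c ^ 2 * (∑ k, (u k - v k) ^ 2)) := by
            simp [Finset.sum_const, mul_comm]
    calc Real.sqrt (∑ j, (r j - s j) ^ 2)
        ≤ Real.sqrt ((p : ℝ) * (c ^ 2 * (∑ k, (u k - v k) ^ 2))) := Real.sqrt_le_sqrt h7
      _ = Real.sqrt p * (c * D) := by
          rw [Real.sqrt_mul (Nat.cast_nonneg p), Real.sqrt_mul (by positivity), hD,
            Real.sqrt_sq hc]
  calc |∑ j, a j * (r j - s j)|
      ≤ Real.sqrt (∑ j, a j ^ 2) * Real.sqrt (∑ j, (r j - s j) ^ 2) := hcs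
    _ ≤ (2 * c) * (Real.sqrt p * (c * D)) := by
        apply mul_le_mul haL hsum_rs (Real.sqrt_nonneg _) (by positivity)
    _ = 2 * (Real.sqrt p * c ^ 2) * D := by ring

/-- Lower bound on the cross-entropy term. -/
lemma loss_lb (A B : ℝ) :
    Real.log 2 - (A - B) / 2 ≤ -Real.log (Real.exp A / (Real.exp A + Real.exp B)) := by
  have hS : (0:ℝ) < Real.exp A + Real.exp B := by positivity
  have key : 2 * Real.exp ((A + B) / 2) ≤ Real.exp A + Real.exp B := by
    have h := sq_nonneg (Real.exp (A / 2) - Real.exp (B / 2))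
    have e1 : Real.exp (A / 2) * Real.exp (A / 2) = Real.exp A := by
      rw [← Real.exp_add]; ring_nf
    have e2 : Real.exp (B / 2) * Real.exp (B / 2) = Real.exp B := by
      rw [← Real.exp_add]; ring_nf
    have e3 : Real.exp (A / 2) * Real.exp (B / 2) = Real.exp ((A + B) / 2) := by
      rw [← Real.exp_add]; ring_nf
    nlinarith
  have hlog : Real.log 2 + (A + B) / 2 ≤ Real.log (Real.exp A + Real.exp B) := by
    have := Real.log_le_log (by positivity) key
    rwa [Real.log_mul two_ne_zero (Real.exp_ne_zero _), Real.log_exp] at this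
  rw [Real.log_div (Real.exp_ne_zero _) hS.ne', Real.log_exp, neg_sub]
  linarith

/-- The cross-entropy term is nonnegative. -/
lemma loss_nonneg (A B C : ℝ) (h : Real.exp C ≤ Real.exp A + Real.exp B) :
    0 ≤ -Real.log (Real.exp C / (Real.exp A + Real.exp B)) := by
  have hS : (0:ℝ) < Real.exp A + Real.exp B := by positivity
  have h1 : Real.exp C / (Real.exp A + Real.exp B) ≤ 1 := (div_le_one hS).mpr h
  have := Real.log_nonpos (by positivity) h1
  linarith

/-- Lower bound on the average robustness radius for a one-hidden-layer ReLU
classifier under the cross-entropy (softmax) loss, assuming the `L_{2,∞}` norms of the weight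
matrices are at most `c`, the loss is at most `ε`, and the training accuracy is at least `γ`
with `(ln 2)·γ > ε`. -/
theorem average_robust_radius_cross_entropy (n m : ℕ) (hn : 1 ≤ n) (hm : 1 ≤ m)
    (c : ℝ) (hc : 0 < c) (ε γ : ℝ) (hε : 0 ≤ ε) (hγ : ε < Real.log 2 * γ)
    (W : Matrix (Fin n) (Fin n) ℝ) (b : Fin n → ℝ)
    (L : Matrix (Fin 2) (Fin n) ℝ) (d : Fin 2 → ℝ)
    (hW : ∀ i, Real.sqrt (∑ j, W i j ^ 2) ≤ c)
    (hL : ∀ i, Real.sqrt (∑ j, L i j ^ 2) ≤ c)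
    (H : (Fin n → ℝ) → Fin 2 → ℝ)
    (hH : ∀ x, H x = L.mulVec (relu (W.mulVec x + b)) + d)
    (Hhat : (Fin n → ℝ) → Fin 2)
    (hHhat : ∀ x, Hhat x = if H x 0 > H x 1 then 0 else 1)
    (x : Fin m → Fin n → ℝ) (y : Fin m → Fin 2)
    (hloss : (1 / m : ℝ) * ∑ i,
        (-Real.log (Real.exp (H (x i) (y i)) /
          (Real.exp (H (x i) 0) + Real.exp (H (x i) 1)))) ≤ ε)
    (G : Finset (Fin m)) (hG : ∀ i, i ∈ G ↔ Hhat (x i) = y i)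
    (hacc : γ * m ≤ G.card) :
    ∃ ρ : Fin m → ℝ,
      (∀ i ∈ G, 0 ≤ ρ i) ∧
      (∀ i ∈ G, ∀ x' : Fin n → ℝ,
        Real.sqrt (∑ j, (x' j - x i j) ^ 2) < ρ i → Hhat x' = Hhat (x i)) ∧
      (1 / m : ℝ) * ∑ i ∈ G, ρ i ≥
        (Real.log 2 * γ - ε) / (Real.sqrt n * c ^ 2) := by
  classical
  set f : (Fin n → ℝ) → ℝ := fun v => H v 0 - H v 1 with hf
  set K : ℝ := Real.sqrt n * c ^ 2 with hK
  have hsn : (1:ℝ) ≤ Real.sqrt n := by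
    rw [show (1:ℝ) = Real.sqrt 1 by simp]
    exact Real.sqrt_le_sqrt (by exact_mod_cast hn)
  have hKpos : 0 < K := by
    rw [hK]; exact mul_pos (lt_of_lt_of_le one_pos hsn) (by positivity)
  have hM : (0:ℝ) < m := by exact_mod_cast hm
  have hlog2 : (0:ℝ) < Real.log 2 := Real.log_pos one_lt_two
  -- Lipschitz property of f
  have hlip : ∀ u v : Fin n → ℝ,
      |f u - f v| ≤ 2 * K * Real.sqrt (∑ j, (u j - v j) ^ 2) := by
    intro u v
    have key := margin_lip c hc.le W b L hW hL u v
    have e : f u - f v =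
        (L.mulVec (relu (W.mulVec u + b)) 0 - L.mulVec (relu (W.mulVec u + b)) 1) -
        (L.mulVec (relu (W.mulVec v + b)) 0 - L.mulVec (relu (W.mulVec v + b)) 1) := by
      simp [hf, hH]; ring
    rw [e]; exact key
  refine ⟨fun i => |f (x i)| / (2 * K), ?_, ?_, ?_⟩
  · intro i _; positivity
  · -- robustness
    intro i hi x' hdist
    have hflip := hlip x' (x i)
    have hbound : |f x' - f (x i)| < |f (x i)| := by
      have h1 : 2 * K * Real.sqrt (∑ j, (x' j - x i j) ^ 2) < |f (x i)| := by
        have := mul_lt_mul_of_pos_left hdist (by positivity : (0:ℝ) < 2 * K)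
        rwa [mul_div_cancel₀ _ (by positivity : (2:ℝ) * K ≠ 0)] at this
      exact lt_of_le_of_lt hflip h1
    have hiff : (H x' 0 > H x' 1) ↔ (H (x i) 0 > H (x i) 1) := by
      rcases abs_lt.mp hbound with ⟨hl, hr⟩
      rcases le_or_gt (f (x i)) 0 with hcase | hcase
      · rw [abs_of_nonpos hcase] at hl hr
        constructor
        · intro h; exfalso
          have : 0 < f x' := by simp only [hf]; linarith
          linarith
        · intro h
          have : 0 < f (x i) := by simp only [hf]; linarith
          linarith
      · rw [abs_of_pos hcase] at hl hr
        constructor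
        · intro _
          have : 0 < f (x i) := hcase
          simp only [hf] at this; linarith
        · intro _
          have : 0 < f x' := by simp only [hf] at hl hr ⊢; linarith
          simp only [hf] at this; linarith
    rw [hHhat, hHhat]
    simp only [hiff]
  · -- the average bound
    set loss : Fin m → ℝ := fun i =>
      -Real.log (Real.exp (H (x i) (y i)) /
        (Real.exp (H (x i) 0) + Real.exp (H (x i) 1))) with hlossdef
    have hper : ∀ i ∈ G, Real.log 2 - |f (x i)| / 2 ≤ loss i := by
      intro i hi
      have hyi : y i = 0 ∨ y i = 1 := by omega
      have hcorrect := (hG i).mp hi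
      rw [hHhat] at hcorrect
      have hli : loss i = -Real.log (Real.exp (H (x i) (y i)) /
          (Real.exp (H (x i) 0) + Real.exp (H (x i) 1))) := rfl
      have hfi : f (x i) = H (x i) 0 - H (x i) 1 := rfl
      rcases hyi with hy | hy
      · -- y i = 0 : correct means H0 > H1, f > 0
        have hpos : H (x i) 0 > H (x i) 1 := by
          by_contra hcon
          rw [if_neg hcon, hy] at hcorrect
          exact one_ne_zero hcorrect
        have habs : |f (x i)| = H (x i) 0 - H (x i) 1 := by
          rw [hfi]; exact abs_of_pos (by linarith)
        have hlb := loss_lb (H (x i) 0) (H (x i) 1)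
        rw [hli, hy, habs]
        linarith
      · -- y i = 1 : correct means ¬(H0 > H1), f ≤ 0
        have hneg : ¬ (H (x i) 0 > H (x i) 1) := by
          by_contra hcon
          rw [if_pos hcon, hy] at hcorrect
          exact zero_ne_one hcorrect
        push_neg at hneg
        have habs : |f (x i)| = H (x i) 1 - H (x i) 0 := by
          rw [hfi, abs_of_nonpos (by linarith)]; ring
        have hlb := loss_lb (H (x i) 1) (H (x i) 0)
        rw [add_comm (Real.exp (H (x i) 1))] at hlb
        rw [hli, hy, habs]
        linarith
    have hnn : ∀ i : Fin m, 0 ≤ loss i := by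
      intro i
      have hyi : y i = 0 ∨ y i = 1 := by omega
      have hli : loss i = -Real.log (Real.exp (H (x i) (y i)) /
          (Real.exp (H (x i) 0) + Real.exp (H (x i) 1))) := rfl
      rw [hli]
      rcases hyi with hy | hy
      · rw [hy]
        exact loss_nonneg _ _ _ (by linarith [Real.exp_pos (H (x i) 1)])
      · rw [hy]
        exact loss_nonneg _ _ _ (by linarith [Real.exp_pos (H (x i) 0)])
    have hsumG : ∑ i ∈ G, loss i ≤ (m : ℝ) * ε := by
      have h1 : ∑ i ∈ G, loss i ≤ ∑ i, loss i :=
        Finset.sum_le_sum_of_subset_of_nonneg (Finset.subset_univ G)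
          (fun i _ _ => hnn i)
      have h2 : ∑ i, loss i ≤ (m : ℝ) * ε := by
        have := hloss
        rw [one_div, inv_mul_le_iff₀ hM] at this
        linarith [this]
      linarith
    have hmargin : (G.card : ℝ) * Real.log 2 - (∑ i ∈ G, |f (x i)|) / 2 ≤ (m : ℝ) * ε := by
      have := Finset.sum_le_sum hper
      rw [Finset.sum_sub_distrib, Finset.sum_const, nsmul_eq_mul] at this
      have hdiv : ∑ i ∈ G, |f (x i)| / 2 = (∑ i ∈ G, |f (x i)|) / 2 := by
        rw [Finset.sum_div]
      rw [hdiv] at this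
      linarith
    set Sf : ℝ := ∑ i ∈ G, |f (x i)| with hSf
    have hSfnn : 0 ≤ Sf := Finset.sum_nonneg fun i _ => abs_nonneg _
    have hGcard : γ * m * Real.log 2 ≤ (G.card : ℝ) * Real.log 2 :=
      mul_le_mul_of_nonneg_right hacc hlog2.le
    have hSflb : 2 * ((m : ℝ) * (Real.log 2 * γ - ε)) ≤ Sf := by nlinarith
    rw [ge_iff_le]
    have e : (1 / (m:ℝ)) * ∑ i ∈ G, |f (x i)| / (2 * K) = Sf / (2 * K * m) := by
      rw [← Finset.sum_div, ← hSf, one_div, inv_mul_eq_div, div_div]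
    rw [e, div_le_div_iff₀ hKpos (by positivity)]
    nlinarith [mul_le_mul_of_nonneg_right hSflb hKpos.le]
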